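/- arXiv:2403.11188 — 4 statements merged into one kernel-verified Lean document; each statement's English description precedes it below -/
import Mathlib

section
/- (Intersection equations / Mendelsohn equations for polar space designs.) Let D be a t-(r,k,λ)_Q design and S a totally isotropic subspace of dimension s. Define the intersection numbers α_j = #{B ∈ D : dim(B ∩ S) = j} for j ∈ {0,…,k}. Then for every i ∈ {0,…,t}: ∑_{j=i}^{s} [j choose i]_q · α_j = [s choose i]_q · λ_i, where λ_i = λ · [r−i choose t−i]_Q / [k−i choose t−i]_q and [a choose b]_q is the Gaussian binomial coefficient. -/
open Module

/-- Gaussian binomial coefficient `[n choose k]_q`. -/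
noncomputable def gaussBinom (q : ℚ) (n k : ℕ) : ℚ :=
  ∏ i ∈ Finset.range k, (q ^ (n - i) - 1) / (q ^ (i + 1) - 1)

/-- The polar-space correction factor `∏_{i=m-j+1}^{m} (q^{i+ε} + 1)`. -/
noncomputable def polarFactor (q : ℚ) (ε : ℤ) (m j : ℕ) : ℚ :=
  ∏ i ∈ Finset.Icc (m - j + 1) m, (q ^ ((i : ℤ) + ε) + 1)

/-- `[m choose j]_Q`, the number of `j`-dim totally isotropic subspaces of a rank-`m`
polar space with parameter `ε`. -/
noncomputable def polarBinom (q : ℚ) (ε : ℤ) (m j : ℕ) : ℚ :=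
  gaussBinom q m j * polarFactor q ε m j

/-!
Double count the pairs `(I, B)` of a block `B ∈ D` and an `i`-dimensional subspace `I ≤ B ⊓ S`.
Each of the `[s choose i]_q` subspaces `I ≤ S` is totally isotropic, hence lies in exactly `λ_i`
blocks, while a block with `dim (B ⊓ S) = j` contains `[j choose i]_q` of them. That a `j`-space
has `[j choose i]_q` subspaces of dimension `i` follows by counting linearly independent
`i`-tuples, directly and through the subspace they span.
-/

open Finset

lemma gaussBinom_of_lt {q : ℚ} {n k : ℕ} (h : n < k) : gaussBinom q n k = 0 :=
  prod_eq_zero (mem_range.2 h) (by simp)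

lemma prod_range_pow_sub_pow (q : ℚ) {i m : ℕ} (him : i ≤ m) :
    ∏ l ∈ range i, (q ^ m - q ^ l) = (∏ l ∈ range i, q ^ l) * ∏ l ∈ range i, (q ^ (m - l) - 1) := by
  rw [← prod_mul_distrib]
  refine prod_congr rfl fun l hl => ?_
  rw [mul_sub, mul_one, ← pow_add, Nat.add_sub_cancel' (by grind)]

lemma gaussBinom_mul_prod_range_pow_sub_pow {q : ℚ} (hq : 1 < q) {n i : ℕ} (hin : i ≤ n) :
    gaussBinom q n i * ∏ l ∈ range i, (q ^ i - q ^ l) = ∏ l ∈ range i, (q ^ n - q ^ l) := by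
  have hreflect : ∏ l ∈ range i, (q ^ (i - l) - 1) = ∏ l ∈ range i, (q ^ (l + 1) - 1) := by
    rw [← prod_range_reflect (fun l => q ^ (l + 1) - 1) i]
    exact prod_congr rfl fun l hl => by grind
  have hden : ∏ l ∈ range i, (q ^ (l + 1) - 1) ≠ 0 :=
    prod_ne_zero_iff.2 fun l _ => sub_ne_zero.2 (one_lt_pow₀ hq l.succ_ne_zero).ne'
  rw [prod_range_pow_sub_pow q le_rfl, prod_range_pow_sub_pow q hin, hreflect, mul_left_comm,
    gaussBinom, prod_div_distrib, div_mul_cancel₀ _ hden]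

lemma cast_prod_range_pow_sub_pow {q i m : ℕ} (hq : 0 < q) (him : i ≤ m) :
    ((∏ l ∈ range i, (q ^ m - q ^ l) : ℕ) : ℚ) = ∏ l ∈ range i, ((q : ℚ) ^ m - q ^ l) := by
  rw [Nat.cast_prod]
  refine prod_congr rfl fun l hl => ?_
  rw [Nat.cast_sub (Nat.pow_le_pow_right hq (by grind)), Nat.cast_pow, Nat.cast_pow]

def linearIndependentSpanEquiv {F V : Type*} [DivisionRing F] [AddCommGroup V] [Module F V]
    [FiniteDimensional F V] {i : ℕ} (U : Submodule F V) (hU : finrank F U = i) :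
    {s : Fin i → V // LinearIndependent F s ∧ Submodule.span F (Set.range s) = U} ≃
      {s : Fin i → U // LinearIndependent F s} where
  toFun s := ⟨fun l => ⟨s.1 l, s.2.2.le (Submodule.subset_span ⟨l, rfl⟩)⟩,
    LinearIndependent.of_comp U.subtype s.2.1⟩
  invFun s := ⟨fun l => s.1 l, s.2.map' U.subtype U.ker_subtype, by
    have hspan : Submodule.span F (Set.range s.1) = ⊤ :=
      s.2.span_eq_top_of_card_eq_finrank' (by simp [hU])
    rw [show Set.range (fun l => (s.1 l : V)) = U.subtype '' Set.range s.1 by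
      rw [← Set.range_comp]; rfl, ← Submodule.map_span, hspan, Submodule.map_top,
      Submodule.range_subtype]⟩
  left_inv _ := rfl
  right_inv _ := rfl

lemma sum_comp_eq_sum_Icc_mul_card {α R : Type*} [Semiring R] (D : Finset α) (g : α → ℕ)
    (c : ℕ → R) {i s : ℕ} (hg : ∀ B ∈ D, g B ≤ s) (hc : ∀ j < i, c j = 0) :
    ∑ B ∈ D, c (g B) = ∑ j ∈ Icc i s, c j * #{B ∈ D | g B = j} := by
  have hfiber (j : ℕ) : ∑ B ∈ D with g B = j, c (g B) = c j * #{B ∈ D | g B = j} := by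
    rw [sum_congr rfl fun B hB => by rw [(mem_filter.1 hB).2], sum_const, nsmul_eq_mul']
  rw [← sum_fiberwise_of_maps_to (t := Icc 0 s) fun B hB => mem_Icc.2 ⟨Nat.zero_le _, hg B hB⟩]
  simp only [hfiber]
  refine (sum_subset (Icc_subset_Icc_left (Nat.zero_le i)) fun j _ hji => ?_).symm
  rw [hc j (by grind), zero_mul]

section Subspaces

variable {F V : Type*} [Field F] [Fintype F] [AddCommGroup V] [Module F V] [Finite V]

attribute [local instance] Fintype.ofFinite

lemma card_submodule_finrank_eq_mul {i : ℕ} (hi : i ≤ finrank F V) :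
    Nat.card {U : Submodule F V // finrank F U = i} *
        ∏ l ∈ range i, (Fintype.card F ^ i - Fintype.card F ^ l) =
      ∏ l ∈ range i, (Fintype.card F ^ finrank F V - Fintype.card F ^ l) := by
  classical
  have hfiber (U : Submodule F V) (hU : finrank F U = i) :
      #{s : Fin i → V | LinearIndependent F s ∧ Submodule.span F (Set.range s) = U} =
        ∏ l ∈ range i, (Fintype.card F ^ i - Fintype.card F ^ l) := by
    rw [← Fintype.card_subtype, ← Nat.card_eq_fintype_card,
      Nat.card_congr (linearIndependentSpanEquiv U hU), card_linearIndependent hU.ge, hU,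
      Fin.prod_univ_eq_prod_range (fun l => Fintype.card F ^ i - Fintype.card F ^ l)]
  have hspan : ∀ s ∈ ({s : Fin i → V | LinearIndependent F s} : Finset _),
      Submodule.span F (Set.range s) ∈ ({U : Submodule F V | finrank F U = i} : Finset _) := by
    intro s hs
    simp [finrank_span_eq_card (mem_filter.1 hs).2]
  calc Nat.card {U : Submodule F V // finrank F U = i} *
        ∏ l ∈ range i, (Fintype.card F ^ i - Fintype.card F ^ l)
      = ∑ U ∈ ({U : Submodule F V | finrank F U = i} : Finset _),
          #{s : Fin i → V | LinearIndependent F s ∧ Submodule.span F (Set.range s) = U} := by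
        rw [sum_congr rfl fun U hU => hfiber U (mem_filter.1 hU).2, sum_const, smul_eq_mul,
          Nat.card_eq_fintype_card, Fintype.card_subtype]
    _ = #{s : Fin i → V | LinearIndependent F s} := by
        rw [card_eq_sum_card_fiberwise hspan]
        simp only [filter_filter]
    _ = ∏ l ∈ range i, (Fintype.card F ^ finrank F V - Fintype.card F ^ l) := by
        rw [← Fintype.card_subtype, ← Nat.card_eq_fintype_card, card_linearIndependent hi,
          Fin.prod_univ_eq_prod_range (fun l => Fintype.card F ^ finrank F V - Fintype.card F ^ l)]

lemma card_submodule_finrank_eq (i : ℕ) :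
    (Nat.card {U : Submodule F V // finrank F U = i} : ℚ) =
      gaussBinom (Fintype.card F) (finrank F V) i := by
  rcases lt_or_ge (finrank F V) i with hlt | hle
  · have : IsEmpty {U : Submodule F V // finrank F U = i} :=
      ⟨fun U => (U.2 ▸ U.1.finrank_le).not_gt hlt⟩
    rw [gaussBinom_of_lt hlt, Nat.card_of_isEmpty, Nat.cast_zero]
  · have hq : (1 : ℚ) < Fintype.card F := by exact_mod_cast Fintype.one_lt_card
    have hprod : ∏ l ∈ range i, ((Fintype.card F : ℚ) ^ i - Fintype.card F ^ l) ≠ 0 :=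
      prod_ne_zero_iff.2 fun l hl => sub_ne_zero.2 (pow_lt_pow_right₀ hq (mem_range.1 hl)).ne'
    refine mul_right_cancel₀ hprod ?_
    rw [gaussBinom_mul_prod_range_pow_sub_pow hq hle, ← cast_prod_range_pow_sub_pow
      Fintype.card_pos le_rfl, ← cast_prod_range_pow_sub_pow Fintype.card_pos hle,
      ← Nat.cast_mul, card_submodule_finrank_eq_mul hle]

lemma card_submodule_le_finrank_eq (W : Submodule F V) (i : ℕ) :
    (Nat.card {U : Submodule F V // U ≤ W ∧ finrank F U = i} : ℚ) =
      gaussBinom (Fintype.card F) (finrank F W) i := by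
  rw [← card_submodule_finrank_eq, ← Nat.card_congr]
  refine (Equiv.subtypeEquiv (Submodule.MapSubtype.orderIso W).toEquiv fun U => ?_).trans
    (Equiv.subtypeSubtypeEquivSubtypeInter _ _)
  exact (Submodule.finrank_map_subtype_eq W U).symm ▸ Iff.rfl

open Classical in
theorem sum_gaussBinom_finrank_inf_eq_mul (D : Finset (Submodule F V)) (S : Submodule F V)
    {i lam : ℕ} (hD : ∀ I ≤ S, finrank F I = i → #{B ∈ D | I ≤ B} = lam) :
    ∑ B ∈ D, gaussBinom (Fintype.card F) (finrank F ↥(B ⊓ S)) i =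
      gaussBinom (Fintype.card F) (finrank F S) i * lam := by
  set subspaces : Submodule F V → Finset (Submodule F V) :=
    fun W => {I | I ≤ W ∧ finrank F I = i} with hsubspaces
  have hcard (W : Submodule F V) :
      gaussBinom (Fintype.card F) (finrank F W) i = #(subspaces W) := by
    rw [← card_submodule_le_finrank_eq, Nat.card_eq_fintype_card, Fintype.card_subtype]
  have hinf (B : Submodule F V) : subspaces (B ⊓ S) = {I ∈ subspaces S | I ≤ B} := by
    ext I
    simp only [hsubspaces, mem_filter, mem_univ, true_and, le_inf_iff]
    tauto
  calc ∑ B ∈ D, gaussBinom (Fintype.card F) (finrank F ↥(B ⊓ S)) i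
      = ∑ B ∈ D, (#{I ∈ subspaces S | I ≤ B} : ℚ) := by simp only [hcard, hinf]
    _ = ∑ I ∈ subspaces S, (#{B ∈ D | I ≤ B} : ℚ) := by
        exact_mod_cast (sum_card_bipartiteAbove_eq_sum_card_bipartiteBelow _).symm
    _ = gaussBinom (Fintype.card F) (finrank F S) i * lam := by
        rw [sum_congr rfl fun I hI => by rw [hD I (mem_filter.1 hI).2.1 (mem_filter.1 hI).2.2],
          sum_const, nsmul_eq_mul, hcard]

end Subspaces

theorem polar_design_intersection_equations_general
    {F V : Type*} [Field F] [Fintype F] [AddCommGroup V] [Module F V]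
    [FiniteDimensional F V]
    (q : ℚ) (hq : q = Fintype.card F)
    (t : ℕ)
    (iso : Submodule F V → Prop)
    (hdown : ∀ U W : Submodule F V, U ≤ W → iso W → iso U)
    (lamseq : ℕ → ℕ)
    (D : Set (Submodule F V))
    (hdesign : ∀ i ≤ t, ∀ I : Submodule F V, iso I → finrank F ↥I = i →
      Nat.card {B : Submodule F V // B ∈ D ∧ I ≤ B} = lamseq i)
    (S : Submodule F V) (s : ℕ) (hS : iso S) (hs : finrank F ↥S = s)
    (i : ℕ) (hi : i ≤ t) :
    ∑ j ∈ Finset.Icc i s, gaussBinom q j i *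
        (Nat.card {B : Submodule F V // B ∈ D ∧ finrank F ↥(B ⊓ S) = j} : ℚ)
      = gaussBinom q s i * lamseq i := by
  classical
  subst hq hs
  have : Finite V := Module.finite_of_finite F
  let := Fintype.ofFinite (Submodule F V)
  set blocks : Finset (Submodule F V) := {B | B ∈ D}
  have hcard (P : Submodule F V → Prop) [DecidablePred P] :
      Nat.card {B // B ∈ D ∧ P B} = #{B ∈ blocks | P B} := by
    rw [Nat.card_eq_fintype_card, Fintype.card_subtype, filter_filter]
  have hregular (I : Submodule F V) (hIS : I ≤ S) (hI : finrank F I = i) :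
      #{B ∈ blocks | I ≤ B} = lamseq i := by
    rw [← hcard, hdesign i hi I (hdown I S hIS hS) hI]
  simp only [hcard]
  rw [← sum_comp_eq_sum_Icc_mul_card blocks (fun B => finrank F ↥(B ⊓ S))
    (gaussBinom (Fintype.card F) · i) (fun B _ => Submodule.finrank_mono inf_le_right)
    fun _ => gaussBinom_of_lt]
  exact sum_gaussBinom_finrank_inf_eq_mul blocks S hregular

/-- Mendelsohn / intersection equations for polar space designs.
`D` is a `t`-`(r,k,lam)_Q` design: a set of `k`-dimensional totally isotropic subspaces
(`iso` being downward closed) such that every `i`-dimensional totally isotropic subspace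
lies in exactly `lamseq i = lam·[r-i choose t-i]_Q/[k-i choose t-i]_q` blocks, `0 ≤ i ≤ t`.
For a totally isotropic subspace `S` of dimension `s` and `α_j = #{B ∈ D : dim(B ∩ S) = j}`,
we have `∑_{j=i}^{s} [j choose i]_q α_j = [s choose i]_q λ_i` for all `i ≤ t`. -/
theorem polar_design_intersection_equations
    {F V : Type*} [Field F] [Fintype F] [AddCommGroup V] [Module F V]
    [FiniteDimensional F V]
    (q : ℚ) (hq : q = Fintype.card F)
    (r t k : ℕ) (ε : ℤ) (htk : t ≤ k) (hkr : k ≤ r)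
    (iso : Submodule F V → Prop)
    (hdown : ∀ U W : Submodule F V, U ≤ W → iso W → iso U)
    (lam : ℕ) (lamseq : ℕ → ℕ)
    (hlamseq : ∀ i ≤ t, (lamseq i : ℚ)
      = lam * polarBinom q ε (r - i) (t - i) / gaussBinom q (k - i) (t - i))
    (D : Set (Submodule F V))
    (hblocks : ∀ B ∈ D, iso B ∧ finrank F ↥B = k)
    (hdesign : ∀ i ≤ t, ∀ I : Submodule F V, iso I → finrank F ↥I = i →
      Nat.card {B : Submodule F V // B ∈ D ∧ I ≤ B} = lamseq i)
    (S : Submodule F V) (s : ℕ) (hS : iso S) (hs : finrank F ↥S = s)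
    (i : ℕ) (hi : i ≤ t) :
    ∑ j ∈ Finset.Icc i s, gaussBinom q j i *
        (Nat.card {B : Submodule F V // B ∈ D ∧ finrank F ↥(B ⊓ S) = j} : ℚ)
      = gaussBinom q s i * lamseq i :=
  polar_design_intersection_equations_general q hq t iso hdown lamseq D hdesign S s hS hs i hi
end

section
/- For q ≥ 2 and r ≥ 4, with ε = −1 (hyperbolic type), one has m₁ > λ₀ where m₁ = q(q^{r−2}+1)(q^r−1)/(q²−1) and λ₀ = (q^{r−2}+1)(q^{r−1}+1). Consequently (via Fisher's inequality λ₀ ≥ 1 + m₁ for 2-designs with k = r) there is no 2-(r,r,1)_{Ω⁺(q)} Steiner system for r ≥ 4. -/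
/-- for `q ≥ 2` and `r ≥ 4` one has `m₁ > λ₀`, where
`m₁ = q(q^{r−2}+1)(q^r−1)/(q²−1)` is the multiplicity of the eigenvalue `q^{r−1}−1` of the
collinearity graph of `Ω⁺(2r,q)` and `λ₀ = (q^{r−2}+1)(q^{r−1}+1)` is the number of blocks
of a hypothetical `2`-`(r,r,1)_{Ω⁺(q)}` Steiner system; consequently (via Fisher's
inequality `λ₀ ≥ 1 + m₁`) no such Steiner system exists for `r ≥ 4`. -/
theorem omega_plus_multiplicity_gt_blocks (q r : ℕ) (hq : 2 ≤ q) (hr : 4 ≤ r) :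
    (q : ℚ) * ((q : ℚ) ^ (r - 2) + 1) * ((q : ℚ) ^ r - 1) / ((q : ℚ) ^ 2 - 1)
      > ((q : ℚ) ^ (r - 2) + 1) * ((q : ℚ) ^ (r - 1) + 1) := by
  obtain ⟨k, rfl⟩ : ∃ k, r = k + 4 := ⟨r - 4, by omega⟩
  have hQ : (2 : ℚ) ≤ (q : ℚ) := by exact_mod_cast hq
  have h1 : k + 4 - 2 = k + 2 := by omega
  have h2 : k + 4 - 1 = k + 3 := by omega
  rw [h1, h2]
  have hx : (1 : ℚ) ≤ (q : ℚ) ^ k := one_le_pow₀ (by linarith)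
  have hpos : (0 : ℚ) < (q : ℚ) ^ 2 - 1 := by nlinarith
  rw [gt_iff_lt, lt_div_iff₀ hpos]
  ring_nf
  have h2k : (q:ℚ)^(k*2) = ((q:ℚ)^k)^2 := by rw [pow_mul]
  rw [h2k]
  set x := (q:ℚ)^k with hxdef
  nlinarith [mul_le_mul_of_nonneg_left hx (show (0:ℚ) ≤ (q:ℚ)^4 * x by positivity),
    mul_le_mul_of_nonneg_left hx (show (0:ℚ) ≤ (q:ℚ)^2 by positivity),
    sq_nonneg x, mul_le_mul_of_nonneg_left hQ (show (0:ℚ) ≤ (q:ℚ)^4 * x^2 by positivity),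
    pow_le_pow_left₀ (by norm_num : (0:ℚ) ≤ 2) hQ 4]
end

section
/- (Residual design, case r′ = r.) Let D be a t-(r,k,λ)_Q design and H a non-degenerate hyperplane of the ambient space such that the polar space Q′ induced on H has the same rank r (and parameter ε′ = ε − 1). Then Res_H(D) = { B ∈ D : B ⊆ H } is a (t−1)-(r,k,λ′)_{Q′} design with λ′ = λ · [r−t+1]_q · (q^{r−k+ε}+1) / [k−t+1]_q, where [m]_q = (q^m−1)/(q−1). -/
open Module

/-- The q-analog `[m]_q = (q^m − 1)/(q − 1)`. -/
noncomputable def qnum (q : ℚ) (m : ℕ) : ℚ := (q ^ m - 1) / (q - 1)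

section AuxCounting

lemma aux_sigma_card_const {ι : Type*} [Finite ι] (f : ι → Type*) [∀ i, Finite (f i)]
    (c : ℚ) (h : ∀ i, (Nat.card (f i) : ℚ) = c) :
    (Nat.card (Σ i, f i) : ℚ) = Nat.card ι * c := by
  cases nonempty_fintype ι
  letI : ∀ i, Fintype (f i) := fun i => Fintype.ofFinite _
  rw [Nat.card_eq_fintype_card, Fintype.card_sigma]
  push_cast
  rw [Finset.sum_congr rfl (fun i _ => by rw [← Nat.card_eq_fintype_card, h i])]
  simp [Nat.card_eq_fintype_card, mul_comm]

lemma aux_card_split {α : Type*} [Finite α] (P Q : α → Prop) :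
    Nat.card {x : α // P x} = Nat.card {x // P x ∧ Q x} + Nat.card {x // P x ∧ ¬ Q x} := by
  classical
  rw [← Nat.card_sum]
  apply Nat.card_congr
  exact (Equiv.sumCompl (fun y : {x : α // P x} => Q y.1)).symm.trans
    (Equiv.sumCongr (Equiv.subtypeSubtypeEquivSubtypeInter P Q)
      (Equiv.subtypeSubtypeEquivSubtypeInter P (fun x => ¬ Q x)))

lemma aux_card_pairs {α β : Type*} [Finite α] [Finite β] (P : α → Prop) (Q : α → β → Prop)
    (c : ℚ) (h : ∀ x, P x → (Nat.card {y // Q x y} : ℚ) = c) :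
    (Nat.card {p : α × β // P p.1 ∧ Q p.1 p.2} : ℚ) = Nat.card {x // P x} * c := by
  have e : {p : α × β // P p.1 ∧ Q p.1 p.2} ≃ Σ x : {x // P x}, {y // Q x.1 y} :=
    { toFun := fun p => ⟨⟨p.1.1, p.2.1⟩, ⟨p.1.2, p.2.2⟩⟩
      invFun := fun s => ⟨(s.1.1, s.2.1), s.1.2, s.2.2⟩
      left_inv := fun p => rfl
      right_inv := fun s => rfl }
  rw [Nat.card_congr e]
  exact aux_sigma_card_const _ c (fun x => h x.1 x.2)

variable {F W : Type*} [Field F] [Fintype F] [AddCommGroup W] [Module F W] [FiniteDimensional F W]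

lemma aux_finite_submodule : Finite (Submodule F W) := by
  have : Finite W := Module.finite_of_finite F
  exact Finite.of_injective (fun p => (p : Set W)) SetLike.coe_injective

/-- The number of lines (1-dimensional subspaces) of a finite vector space. -/
lemma aux_card_lines : Nat.card {L : Submodule F W // finrank F ↥L = 1} * (Fintype.card F - 1)
    = Fintype.card F ^ finrank F W - 1 := by
  have : Finite W := Module.finite_of_finite F
  have : Finite (Submodule F W) := aux_finite_submodule
  cases nonempty_fintype W
  classical
  have e : {v : W // v ≠ 0} ≃ Σ L : {L : Submodule F W // finrank F ↥L = 1}, {x : ↥L.1 // x ≠ 0} := by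
    refine
      { toFun := fun v => ⟨⟨Submodule.span F {v.1}, finrank_span_singleton v.2⟩,
          ⟨⟨v.1, Submodule.mem_span_singleton_self _⟩, by
            simp only [ne_eq, Submodule.mk_eq_zero]; exact v.2⟩⟩
        invFun := fun s => ⟨s.2.1.1, by
          simpa [ne_eq, Submodule.coe_eq_zero] using s.2.2⟩
        left_inv := fun v => rfl
        right_inv := fun s => ?_ }
    obtain ⟨⟨L, hL⟩, ⟨⟨x, hx⟩, hx0⟩⟩ := s
    have hx0' : x ≠ 0 := by simpa using hx0
    have hspan : Submodule.span F {x} = L := by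
      apply Submodule.eq_of_le_of_finrank_le (Submodule.span_le.2 (by simpa using hx))
      rw [finrank_span_singleton hx0', hL]
    subst hspan
    rfl
  have hcard : (Nat.card {v : W // v ≠ 0} : ℚ)
      = Nat.card {L : Submodule F W // finrank F ↥L = 1} * (Fintype.card F - 1 : ℕ) := by
    rw [Nat.card_congr e]
    apply aux_sigma_card_const
    rintro ⟨L, hL⟩
    haveI : Fintype ↥L := Fintype.ofFinite _
    have hcardL : Fintype.card ↥L = Fintype.card F := by
      rw [card_eq_pow_finrank (K := F), hL, pow_one]
    rw [Nat.card_eq_fintype_card, Fintype.card_subtype_compl, Fintype.card_subtype_eq (0 : ↥L), hcardL]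
  have hnz : Nat.card {v : W // v ≠ 0} = Fintype.card F ^ finrank F W - 1 := by
    rw [Nat.card_eq_fintype_card, Fintype.card_subtype_compl, Fintype.card_subtype_eq (0 : W),
      card_eq_pow_finrank (K := F)]
  rw [hnz] at hcard
  exact_mod_cast hcard.symm

lemma aux_finrank_comap_mkQ (P : Submodule F W) (L : Submodule F (W ⧸ P)) :
    finrank F ↥(L.comap P.mkQ) = finrank F ↥L + finrank F ↥P := by
  set C := L.comap P.mkQ with hC
  have hPC : P ≤ C := by
    intro x hx
    simp [hC, Submodule.mem_comap, (Submodule.Quotient.mk_eq_zero P).2 hx]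
  let f : ↥C →ₗ[F] W ⧸ P := P.mkQ.comp C.subtype
  have hrange : LinearMap.range f = L := by
    rw [LinearMap.range_comp, Submodule.range_subtype]
    exact Submodule.map_comap_eq_self (by rw [Submodule.range_mkQ]; exact le_top)
  have hker : finrank F ↥(LinearMap.ker f) = finrank F ↥P := by
    have hker' : LinearMap.ker f = P.comap C.subtype := by
      ext x; simp [f, Submodule.Quotient.mk_eq_zero]
    rw [hker']
    have := Submodule.finrank_map_subtype_eq C (P.comap C.subtype)
    rw [← this, Submodule.map_comap_subtype, inf_eq_right.2 hPC]
  have := LinearMap.finrank_range_add_finrank_ker f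
  rw [hrange, hker] at this
  omega

/-- The number of subspaces `T` with `P ≤ T ≤ K` of dimension one more than `P`. -/
lemma aux_card_between (P K : Submodule F W) (hPK : P ≤ K) :
    Nat.card {T : Submodule F W // P ≤ T ∧ T ≤ K ∧ finrank F ↥T = finrank F ↥P + 1}
      * (Fintype.card F - 1) = Fintype.card F ^ (finrank F ↥K - finrank F ↥P) - 1 := by
  set K' : Submodule F (W ⧸ P) := K.map P.mkQ with hK'
  have hcomapK : (K').comap P.mkQ = K := by
    rw [hK', Submodule.comap_map_mkQ, sup_eq_right.2 hPK]
  have hrkK' : finrank F ↥K' = finrank F ↥K - finrank F ↥P := by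
    have := aux_finrank_comap_mkQ P K'
    rw [hcomapK] at this
    have h2 := Submodule.finrank_mono hPK
    omega
  have e1 : {T : Submodule F W // P ≤ T ∧ T ≤ K ∧ finrank F ↥T = finrank F ↥P + 1}
      ≃ {L : Submodule F (W ⧸ P) // L ≤ K' ∧ finrank F ↥L = 1} := by
    refine
      { toFun := fun T => ⟨T.1.map P.mkQ, Submodule.map_mono T.2.2.1, ?_⟩
        invFun := fun L => ⟨L.1.comap P.mkQ, Submodule.le_comap_mkQ P _, ?_, ?_⟩
        left_inv := fun T => Subtype.ext ?_
        right_inv := fun L => Subtype.ext ?_ }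
    · obtain ⟨T, hPT, hTK, hrk⟩ := T
      have hc : (T.map P.mkQ).comap P.mkQ = T := by
        rw [Submodule.comap_map_mkQ, sup_eq_right.2 hPT]
      have h5 := aux_finrank_comap_mkQ P (T.map P.mkQ)
      rw [hc] at h5
      show finrank F ↥(Submodule.map P.mkQ T) = 1
      omega
    · calc L.1.comap P.mkQ ≤ K'.comap P.mkQ := Submodule.comap_mono L.2.1
        _ = K := hcomapK
    · rw [aux_finrank_comap_mkQ P L.1, L.2.2, Nat.add_comm]
    · simp only
      rw [Submodule.comap_map_mkQ, sup_eq_right.2 T.2.1]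
    · simp only
      exact Submodule.map_comap_eq_self (by rw [Submodule.range_mkQ]; exact le_top)
  have e2 : {L : Submodule F (W ⧸ P) // L ≤ K' ∧ finrank F ↥L = 1}
      ≃ {L' : Submodule F ↥K' // finrank F ↥L' = 1} := by
    refine
      { toFun := fun L => ⟨L.1.comap K'.subtype, ?_⟩
        invFun := fun L' => ⟨L'.1.map K'.subtype, Submodule.map_subtype_le _ _, by
          rw [Submodule.finrank_map_subtype_eq]; exact L'.2⟩
        left_inv := fun L => Subtype.ext ?_
        right_inv := fun L' => Subtype.ext ?_ }
    · have hmc : (L.1.comap K'.subtype).map K'.subtype = L.1 := by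
        rw [Submodule.map_comap_subtype, inf_eq_right.2 L.2.1]
      have := Submodule.finrank_map_subtype_eq K' (L.1.comap K'.subtype)
      rw [hmc] at this
      rw [← this, L.2.2]
    · simp only
      rw [Submodule.map_comap_subtype, inf_eq_right.2 L.2.1]
    · simp only
      exact Submodule.comap_map_eq_of_injective K'.injective_subtype _
  rw [Nat.card_congr (e1.trans e2), ← hrkK']
  exact aux_card_lines

end AuxCounting

/-- residual design, case `r′ = r`: let `D` be a `t`-`(r,k,λ)_Q` design in
a polar space (with parameter `ε`) embedded in the ambient space `V` over `F`, `|F| = q`,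
and let `H` be a non-degenerate hyperplane of `V` such that the induced polar space `Q′`
on `H` has rank `r` (and parameter `ε − 1`): every totally isotropic `(t−1)`-space lies in
`[r−t+1]_q(q^{r−t+1+ε}+1)` totally isotropic `t`-spaces, of which
`[r−t+1]_q(q^{r−t+ε}+1)` lie in `H`.  Then `Res_H(D) = {B ∈ D : B ⊆ H}` is a
`(t−1)`-`(r,k,λ′)_{Q′}` design with `λ′ = λ·[r−t+1]_q·(q^{r−k+ε}+1)/[k−t+1]_q`. -/
theorem polar_design_residual_same_rank
    {F V : Type*} [Field F] [Fintype F] [AddCommGroup V] [Module F V]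
    [FiniteDimensional F V]
    (q : ℚ) (hq : q = Fintype.card F)
    (r t k : ℕ) (ε : ℤ) (ht : 1 ≤ t) (htk : t ≤ k) (hkr : k ≤ r)
    (iso : Submodule F V → Prop)
    (hdown : ∀ U W : Submodule F V, U ≤ W → iso W → iso U)
    (H : Submodule F V) (hH : finrank F ↥H = finrank F V - 1)
    (hNQ : ∀ T' : Submodule F V, iso T' → finrank F ↥T' = t - 1 →
      (Nat.card {T : Submodule F V // iso T ∧ finrank F ↥T = t ∧ T' ≤ T} : ℚ)
        = qnum q (r - t + 1) * (q ^ ((r : ℤ) - t + 1 + ε) + 1))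
    (hNQ' : ∀ T' : Submodule F V, T' ≤ H → iso T' → finrank F ↥T' = t - 1 →
      (Nat.card {T : Submodule F V // iso T ∧ finrank F ↥T = t ∧ T' ≤ T ∧ T ≤ H} : ℚ)
        = qnum q (r - t + 1) * (q ^ ((r : ℤ) - t + ε) + 1))
    (lam : ℕ) (D : Set (Submodule F V))
    (hblocks : ∀ B ∈ D, iso B ∧ finrank F ↥B = k)
    (hdesign : ∀ T : Submodule F V, iso T → finrank F ↥T = t →
      Nat.card {B : Submodule F V // B ∈ D ∧ T ≤ B} = lam)
    (T' : Submodule F V) (hT'H : T' ≤ H) (hT'iso : iso T')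
    (hT' : finrank F ↥T' = t - 1) :
    (Nat.card {B : Submodule F V // B ∈ D ∧ B ≤ H ∧ T' ≤ B} : ℚ)
      = lam * qnum q (r - t + 1) * (q ^ ((r : ℤ) - k + ε) + 1) / qnum q (k - t + 1) := by
  classical
  have finV : Finite V := Module.finite_of_finite F
  have finSub : Finite (Submodule F V) := aux_finite_submodule
  have hq2 : 2 ≤ Fintype.card F := Fintype.one_lt_card
  have hq1 : (1 : ℚ) < q := by rw [hq]; exact_mod_cast hq2
  have hq0 : q ≠ 0 := by intro h; rw [h] at hq1; norm_num at hq1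
  have hqm1 : q - 1 ≠ 0 := sub_ne_zero.2 (ne_of_gt hq1)
  -- the basic interval count, in ℚ
  have hbet : ∀ P K : Submodule F V, P ≤ K →
      (Nat.card {T : Submodule F V // P ≤ T ∧ T ≤ K ∧ finrank F ↥T = finrank F ↥P + 1} : ℚ)
        * (q - 1) = q ^ (finrank F ↥K - finrank F ↥P) - 1 := by
    intro P K hPK
    have h := aux_card_between P K hPK
    have h1 : 1 ≤ Fintype.card F ^ (finrank F ↥K - finrank F ↥P) :=
      Nat.one_le_pow _ _ (by omega)
    have h' := congrArg (fun n : ℕ => (n : ℚ)) h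
    rw [hq]
    push_cast [Nat.cast_sub h1, Nat.cast_sub (by omega : 1 ≤ Fintype.card F)] at h' ⊢
    linarith [h']
  -- fiber count 1: t-spaces between T' and a block B
  have hfib1 : ∀ B : Submodule F V, (B ∈ D ∧ T' ≤ B) →
      (Nat.card {T : Submodule F V // iso T ∧ finrank F ↥T = t ∧ T' ≤ T ∧ T ≤ B} : ℚ)
        = (q ^ (k - t + 1) - 1) / (q - 1) := by
    rintro B ⟨hBD, hT'B⟩
    obtain ⟨hBiso, hBrk⟩ := hblocks B hBD
    have e : {T : Submodule F V // iso T ∧ finrank F ↥T = t ∧ T' ≤ T ∧ T ≤ B}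
        ≃ {T : Submodule F V // T' ≤ T ∧ T ≤ B ∧ finrank F ↥T = finrank F ↥T' + 1} := by
      apply Equiv.subtypeEquivRight
      intro T
      constructor
      · rintro ⟨h1, h2, h3, h4⟩
        exact ⟨h3, h4, by omega⟩
      · rintro ⟨h1, h2, h3⟩
        exact ⟨hdown T B h2 hBiso, by omega, h1, h2⟩
    have hb := hbet T' B hT'B
    rw [show finrank F ↥B - finrank F ↥T' = k - t + 1 from by rw [hBrk, hT']; omega] at hb
    rw [Nat.card_congr e, eq_div_iff hqm1]
    exact hb
  -- fiber count 2: t-spaces between T' and a block B not contained in H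
  have hfib2 : ∀ B : Submodule F V, (B ∈ D ∧ T' ≤ B ∧ ¬ B ≤ H) →
      (Nat.card {T : Submodule F V // iso T ∧ finrank F ↥T = t ∧ T' ≤ T ∧ (T ≤ B ∧ ¬ T ≤ H)} : ℚ)
        = q ^ (k - t) := by
    rintro B ⟨hBD, hT'B, hBH⟩
    obtain ⟨hBiso, hBrk⟩ := hblocks B hBD
    -- finrank of B ⊓ H
    have hsup : B ⊔ H = ⊤ := by
      have hlt : H < B ⊔ H :=
        lt_of_le_of_ne le_sup_right (fun he => hBH (le_sup_left.trans he.ge))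
      have h1 : finrank F ↥H < finrank F ↥(B ⊔ H) := Submodule.finrank_lt_finrank_of_lt hlt
      have h2 : finrank F ↥(B ⊔ H) ≤ finrank F V := Submodule.finrank_le _
      apply Submodule.eq_top_of_finrank_eq
      omega
    have hBinf : finrank F ↥(B ⊓ H) = k - 1 := by
      have h3 := Submodule.finrank_sup_add_finrank_inf_eq B H
      have h4 : finrank F ↥H < finrank F V := by
        have := Submodule.finrank_lt_finrank_of_lt (lt_of_le_of_ne le_sup_right
          (fun he => hBH (le_sup_left.trans he.ge)))
        have h2 : finrank F ↥(B ⊔ H) ≤ finrank F V := Submodule.finrank_le _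
        omega
      rw [hsup, finrank_top] at h3
      omega
    -- split the interval count
    have hsplit := aux_card_split
      (fun T : Submodule F V => T' ≤ T ∧ T ≤ B ∧ finrank F ↥T = finrank F ↥T' + 1)
      (fun T => T ≤ H)
    have hin : (Nat.card {T : Submodule F V //
        (T' ≤ T ∧ T ≤ B ∧ finrank F ↥T = finrank F ↥T' + 1) ∧ T ≤ H} : ℚ)
        * (q - 1) = q ^ (k - t) - 1 := by
      have e : {T : Submodule F V //
          (T' ≤ T ∧ T ≤ B ∧ finrank F ↥T = finrank F ↥T' + 1) ∧ T ≤ H}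
          ≃ {T : Submodule F V // T' ≤ T ∧ T ≤ B ⊓ H ∧ finrank F ↥T = finrank F ↥T' + 1} := by
        apply Equiv.subtypeEquivRight
        intro T
        constructor
        · rintro ⟨⟨h1, h2, h3⟩, h4⟩
          exact ⟨h1, le_inf h2 h4, h3⟩
        · rintro ⟨h1, h2, h3⟩
          exact ⟨⟨h1, h2.trans inf_le_left, h3⟩, h2.trans inf_le_right⟩
      have hb := hbet T' (B ⊓ H) (le_inf hT'B hT'H)
      rw [show finrank F ↥(B ⊓ H) - finrank F ↥T' = k - t from by rw [hBinf, hT']; omega] at hb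
      rw [Nat.card_congr e]
      exact hb
    have htot : (Nat.card {T : Submodule F V //
        T' ≤ T ∧ T ≤ B ∧ finrank F ↥T = finrank F ↥T' + 1} : ℚ)
        * (q - 1) = q ^ (k - t + 1) - 1 := by
      have hb := hbet T' B hT'B
      rw [show finrank F ↥B - finrank F ↥T' = k - t + 1 from by rw [hBrk, hT']; omega] at hb
      exact hb
    have hout : (Nat.card {T : Submodule F V //
        (T' ≤ T ∧ T ≤ B ∧ finrank F ↥T = finrank F ↥T' + 1) ∧ ¬ T ≤ H} : ℚ)
        = q ^ (k - t) := by
      have h5 : ((Nat.card {T : Submodule F V //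
          T' ≤ T ∧ T ≤ B ∧ finrank F ↥T = finrank F ↥T' + 1} : ℕ) : ℚ)
          = (Nat.card {T : Submodule F V //
              (T' ≤ T ∧ T ≤ B ∧ finrank F ↥T = finrank F ↥T' + 1) ∧ T ≤ H} : ℚ)
            + (Nat.card {T : Submodule F V //
              (T' ≤ T ∧ T ≤ B ∧ finrank F ↥T = finrank F ↥T' + 1) ∧ ¬ T ≤ H} : ℚ) := by
        exact_mod_cast congrArg (fun n : ℕ => (n : ℚ)) hsplit
      apply mul_right_cancel₀ hqm1
      linear_combination htot - hin - (q - 1) * h5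
    have e2 : {T : Submodule F V // iso T ∧ finrank F ↥T = t ∧ T' ≤ T ∧ (T ≤ B ∧ ¬ T ≤ H)}
        ≃ {T : Submodule F V //
            (T' ≤ T ∧ T ≤ B ∧ finrank F ↥T = finrank F ↥T' + 1) ∧ ¬ T ≤ H} := by
      apply Equiv.subtypeEquivRight
      intro T
      constructor
      · rintro ⟨h1, h2, h3, h4, h5⟩
        exact ⟨⟨h3, h4, by omega⟩, h5⟩
      · rintro ⟨⟨h1, h2, h3⟩, h4⟩
        exact ⟨hdown T B h2 hBiso, by omega, h1, h2, h4⟩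
    rw [Nat.card_congr e2, hout]
  -- abbreviations
  set Nq : ℚ := qnum q (r - t + 1) with hNq
  -- double count 1 : pairs (T, B) with T' ≤ T ≤ B
  have E1a : (Nat.card {p : Submodule F V × Submodule F V //
      (iso p.1 ∧ finrank F ↥p.1 = t ∧ T' ≤ p.1) ∧ (p.2 ∈ D ∧ p.1 ≤ p.2)} : ℚ)
      = Nat.card {T : Submodule F V // iso T ∧ finrank F ↥T = t ∧ T' ≤ T} * lam := by
    refine aux_card_pairs (fun T => iso T ∧ finrank F ↥T = t ∧ T' ≤ T)
      (fun T B => B ∈ D ∧ T ≤ B) (lam : ℚ) ?_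
    rintro T ⟨h1, h2, h3⟩
    exact_mod_cast congrArg (fun n : ℕ => (n : ℚ)) (hdesign T h1 h2)
  have E1b : (Nat.card {p : Submodule F V × Submodule F V //
      (iso p.1 ∧ finrank F ↥p.1 = t ∧ T' ≤ p.1) ∧ (p.2 ∈ D ∧ p.1 ≤ p.2)} : ℚ)
      = Nat.card {B : Submodule F V // B ∈ D ∧ T' ≤ B} * ((q ^ (k - t + 1) - 1) / (q - 1)) := by
    have esw : {p : Submodule F V × Submodule F V //
        (iso p.1 ∧ finrank F ↥p.1 = t ∧ T' ≤ p.1) ∧ (p.2 ∈ D ∧ p.1 ≤ p.2)}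
        ≃ {p : Submodule F V × Submodule F V //
        (p.1 ∈ D ∧ T' ≤ p.1) ∧ (iso p.2 ∧ finrank F ↥p.2 = t ∧ T' ≤ p.2 ∧ p.2 ≤ p.1)} := by
      apply (Equiv.prodComm _ _).subtypeEquiv
      rintro ⟨T, B⟩
      constructor
      · rintro ⟨⟨h1, h2, h3⟩, h4, h5⟩
        exact ⟨⟨h4, h3.trans h5⟩, h1, h2, h3, h5⟩
      · rintro ⟨⟨h1, h2⟩, h3, h4, h5, h6⟩
        exact ⟨⟨h3, h4, h5⟩, h1, h6⟩
    rw [Nat.card_congr esw]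
    refine aux_card_pairs (fun B => B ∈ D ∧ T' ≤ B)
      (fun B T => iso T ∧ finrank F ↥T = t ∧ T' ≤ T ∧ T ≤ B)
      ((q ^ (k - t + 1) - 1) / (q - 1)) ?_
    intro B hB
    exact hfib1 B hB
  -- double count 2 : pairs (T, B) with T' ≤ T ≤ B and T not in H
  have E2a : (Nat.card {p : Submodule F V × Submodule F V //
      (iso p.1 ∧ finrank F ↥p.1 = t ∧ T' ≤ p.1 ∧ ¬ p.1 ≤ H) ∧ (p.2 ∈ D ∧ p.1 ≤ p.2)} : ℚ)
      = Nat.card {T : Submodule F V // iso T ∧ finrank F ↥T = t ∧ T' ≤ T ∧ ¬ T ≤ H} * lam := by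
    refine aux_card_pairs (fun T => iso T ∧ finrank F ↥T = t ∧ T' ≤ T ∧ ¬ T ≤ H)
      (fun T B => B ∈ D ∧ T ≤ B) (lam : ℚ) ?_
    rintro T ⟨h1, h2, h3⟩
    exact_mod_cast congrArg (fun n : ℕ => (n : ℚ)) (hdesign T h1 h2)
  have E2b : (Nat.card {p : Submodule F V × Submodule F V //
      (iso p.1 ∧ finrank F ↥p.1 = t ∧ T' ≤ p.1 ∧ ¬ p.1 ≤ H) ∧ (p.2 ∈ D ∧ p.1 ≤ p.2)} : ℚ)
      = Nat.card {B : Submodule F V // B ∈ D ∧ T' ≤ B ∧ ¬ B ≤ H} * (q ^ (k - t)) := by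
    have esw : {p : Submodule F V × Submodule F V //
        (iso p.1 ∧ finrank F ↥p.1 = t ∧ T' ≤ p.1 ∧ ¬ p.1 ≤ H) ∧ (p.2 ∈ D ∧ p.1 ≤ p.2)}
        ≃ {p : Submodule F V × Submodule F V //
        (p.1 ∈ D ∧ T' ≤ p.1 ∧ ¬ p.1 ≤ H) ∧
          (iso p.2 ∧ finrank F ↥p.2 = t ∧ T' ≤ p.2 ∧ (p.2 ≤ p.1 ∧ ¬ p.2 ≤ H))} := by
      apply (Equiv.prodComm _ _).subtypeEquiv
      rintro ⟨T, B⟩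
      constructor
      · rintro ⟨⟨h1, h2, h3, h4⟩, h5, h6⟩
        exact ⟨⟨h5, h3.trans h6, fun hc => h4 (h6.trans hc)⟩, h1, h2, h3, h6, h4⟩
      · rintro ⟨⟨h1, h2, h3⟩, h4, h5, h6, h7, h8⟩
        exact ⟨⟨h4, h5, h6, h8⟩, h1, h7⟩
    rw [Nat.card_congr esw]
    refine aux_card_pairs (fun B => B ∈ D ∧ T' ≤ B ∧ ¬ B ≤ H)
      (fun B T => iso T ∧ finrank F ↥T = t ∧ T' ≤ T ∧ (T ≤ B ∧ ¬ T ≤ H))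
      (q ^ (k - t) : ℚ) ?_
    intro B hB
    exact hfib2 B hB
  -- values of the point counts
  have hn1 : (Nat.card {T : Submodule F V // iso T ∧ finrank F ↥T = t ∧ T' ≤ T} : ℚ)
      = Nq * (q ^ ((r : ℤ) - t + 1 + ε) + 1) := hNQ T' hT'iso hT'
  have hn2 : (Nat.card {T : Submodule F V // iso T ∧ finrank F ↥T = t ∧ T' ≤ T ∧ ¬ T ≤ H} : ℚ)
      = Nq * (q ^ ((r : ℤ) - t + 1 + ε) + 1) - Nq * (q ^ ((r : ℤ) - t + ε) + 1) := by
    have hsplit := aux_card_split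
      (fun T : Submodule F V => iso T ∧ finrank F ↥T = t ∧ T' ≤ T) (fun T => T ≤ H)
    have e1 : {T : Submodule F V // (iso T ∧ finrank F ↥T = t ∧ T' ≤ T) ∧ T ≤ H}
        ≃ {T : Submodule F V // iso T ∧ finrank F ↥T = t ∧ T' ≤ T ∧ T ≤ H} :=
      Equiv.subtypeEquivRight (fun T => by tauto)
    have e2 : {T : Submodule F V // (iso T ∧ finrank F ↥T = t ∧ T' ≤ T) ∧ ¬ T ≤ H}
        ≃ {T : Submodule F V // iso T ∧ finrank F ↥T = t ∧ T' ≤ T ∧ ¬ T ≤ H} :=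
      Equiv.subtypeEquivRight (fun T => by tauto)
    rw [Nat.card_congr e1, Nat.card_congr e2] at hsplit
    have h5 := congrArg (fun n : ℕ => (n : ℚ)) hsplit
    push_cast at h5
    rw [hn1, hNQ' T' hT'H hT'iso hT'] at h5
    linarith
  -- split blocks through T' into those inside H and the rest
  have hAsplit := aux_card_split
    (fun B : Submodule F V => B ∈ D ∧ T' ≤ B) (fun B => B ≤ H)
  have eA1 : {B : Submodule F V // (B ∈ D ∧ T' ≤ B) ∧ B ≤ H}
      ≃ {B : Submodule F V // B ∈ D ∧ B ≤ H ∧ T' ≤ B} :=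
    Equiv.subtypeEquivRight (fun B => by tauto)
  have eA2 : {B : Submodule F V // (B ∈ D ∧ T' ≤ B) ∧ ¬ B ≤ H}
      ≃ {B : Submodule F V // B ∈ D ∧ T' ≤ B ∧ ¬ B ≤ H} :=
    Equiv.subtypeEquivRight (fun B => by tauto)
  rw [Nat.card_congr eA1, Nat.card_congr eA2] at hAsplit
  have hA : (Nat.card {B : Submodule F V // B ∈ D ∧ T' ≤ B} : ℚ)
      = (Nat.card {B : Submodule F V // B ∈ D ∧ B ≤ H ∧ T' ≤ B} : ℚ)
        + (Nat.card {B : Submodule F V // B ∈ D ∧ T' ≤ B ∧ ¬ B ≤ H} : ℚ) := by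
    exact_mod_cast congrArg (fun n : ℕ => (n : ℚ)) hAsplit
  -- nonvanishing facts
  have hc1ne : q ^ (k - t + 1) - 1 ≠ 0 := by
    have : (1 : ℚ) < q ^ (k - t + 1) := one_lt_pow₀ hq1 (by omega)
    linarith
  have hqkt : (q : ℚ) ^ (k - t) ≠ 0 := pow_ne_zero _ hq0
  -- exponent rewrites
  have hz1 : q ^ ((r : ℤ) - t + 1 + ε) = q ^ ((r : ℤ) - k + ε) * q ^ (k - t + 1) := by
    rw [← zpow_natCast q (k - t + 1), ← zpow_add₀ hq0]
    congr 1
    omega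
  have hz2 : q ^ ((r : ℤ) - t + ε) = q ^ ((r : ℤ) - k + ε) * q ^ (k - t) := by
    rw [← zpow_natCast q (k - t), ← zpow_add₀ hq0]
    congr 1
    omega
  -- put everything together
  rw [E1a] at E1b
  rw [E2a] at E2b
  rw [hn1] at E1b
  rw [hn2] at E2b
  rw [hA] at E1b
  set Y : ℚ := q ^ ((r : ℤ) - k + ε) with hY
  rw [hz1] at E1b
  rw [hz1, hz2] at E2b
  set AH : ℚ := (Nat.card {B : Submodule F V // B ∈ D ∧ B ≤ H ∧ T' ≤ B} : ℚ) with hAHd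
  set AN : ℚ := (Nat.card {B : Submodule F V // B ∈ D ∧ T' ≤ B ∧ ¬ B ≤ H} : ℚ) with hANd
  have hAN : AN = Nq * lam * Y * (q - 1) := by
    apply mul_right_cancel₀ hqkt
    rw [← E2b]
    ring
  have E1b' := congrArg (fun x : ℚ => x * (q - 1)) E1b
  rw [mul_assoc (AH + AN), div_mul_cancel₀ _ hqm1] at E1b'
  have hAH : AH * (q ^ (k - t + 1) - 1) = lam * Nq * (Y + 1) * (q - 1) := by
    linear_combination (-1 : ℚ) * E1b' - (q ^ (k - t + 1) - 1) * hAN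
  show AH = lam * Nq * (Y + 1) / qnum q (k - t + 1)
  have hqnum : qnum q (k - t + 1) = (q ^ (k - t + 1) - 1) / (q - 1) := rfl
  rw [hqnum, div_div_eq_mul_div, eq_div_iff hc1ne]
  linear_combination hAH
end

section
/- (Residual design, case r′ = r−1.) Let D be a t-(r,k,λ)_Q design and H a non-degenerate hyperplane such that the induced polar space Q′ has rank r−1 (parameter ε′ = ε + 1). Then Res_H(D) = { B ∈ D : B ⊆ H } is a (t−1)-(r−1,k,λ′)_{Q′} design with λ′ = λ · (q^{r−t+1+ε}+1) · [r−k]_q / [k−t+1]_q. In particular, if k = r then λ′ = 0, i.e., no block of D is contained in H. -/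
open Module

open Finset

private lemma count_cover {F V : Type*} [Field F] [Fintype F] [AddCommGroup V] [Module F V]
    [FiniteDimensional F V] (q : ℚ) (hq : q = Fintype.card F)
    (s : ℕ) (T' W : Submodule F V) (hTW : T' ≤ W) (hT's : finrank F ↥T' = s) :
    (Nat.card {T : Submodule F V // finrank F ↥T = s + 1 ∧ T' ≤ T ∧ T ≤ W} : ℚ)
      = qnum q (finrank F ↥W - s) := by
  classical
  haveI : Finite V := Module.finite_of_finite F
  haveI : Fintype V := Fintype.ofFinite V
  haveI : Fintype (Submodule F V) := Fintype.ofFinite _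
  set n := finrank F ↥W with hn
  have hsn : s ≤ n := hT's ▸ Submodule.finrank_mono hTW
  set c := Fintype.card F with hc
  have hc2 : 2 ≤ c := Fintype.one_lt_card
  have hq2 : (1:ℚ) < q := by rw [hq]; exact_mod_cast hc2
  have hq0 : (0:ℚ) < q := lt_trans one_pos hq2
  -- the Finsets
  set S : Finset (Submodule F V) :=
    univ.filter (fun T => finrank F ↥T = s + 1 ∧ T' ≤ T ∧ T ≤ W) with hS
  set E : Finset V := univ.filter (fun v => v ∈ W ∧ v ∉ T') with hE
  have hcard : Nat.card {T : Submodule F V // finrank F ↥T = s + 1 ∧ T' ≤ T ∧ T ≤ W}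
      = S.card := by
    rw [Nat.card_eq_fintype_card, Fintype.card_subtype]
  -- counting submodule elements
  have subcard : ∀ U : Submodule F V, (univ.filter (fun v => v ∈ U)).card
      = c ^ finrank F ↥U := by
    intro U
    have h1 : Fintype.card {v // v ∈ U} = (univ.filter (fun v => v ∈ U)).card :=
      Fintype.card_subtype _
    have h2 : Fintype.card {v // v ∈ U} = c ^ finrank F ↥U := by
      have : Fintype.card ↥U = c ^ finrank F ↥U := card_eq_pow_finrank
      rw [← this]
    omega
  have diffcard : ∀ U U' : Submodule F V, U' ≤ U →
      (univ.filter (fun v => v ∈ U ∧ v ∉ U')).card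
        = c ^ finrank F ↥U - c ^ finrank F ↥U' := by
    intro U U' hle
    have : univ.filter (fun v => v ∈ U ∧ v ∉ U')
        = univ.filter (fun v => v ∈ U) \ univ.filter (fun v => v ∈ U') := by
      ext v; simp only [mem_filter, mem_univ, true_and, mem_sdiff]
    rw [this, card_sdiff_of_subset, subcard, subcard]
    intro v hv
    simp only [mem_filter, mem_univ, true_and] at hv ⊢
    exact hle hv
  -- the covering map
  set f : V → Submodule F V := fun v => T' ⊔ Submodule.span F {v} with hf
  have hmem : ∀ v, v ∈ f v := fun v =>
    Submodule.mem_sup_right (Submodule.mem_span_singleton_self v)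
  have hfS : ∀ v ∈ E, f v ∈ S := by
    intro v hv
    simp only [hE, mem_filter, mem_univ, true_and] at hv
    obtain ⟨hvW, hvT'⟩ := hv
    have hv0 : v ≠ 0 := fun h => hvT' (h ▸ T'.zero_mem)
    have hrank : finrank F ↥(f v) = s + 1 := by
      have hinf : T' ⊓ Submodule.span F {v} = ⊥ := by
        rw [eq_bot_iff]
        intro x hx
        rw [Submodule.mem_inf] at hx
        obtain ⟨hx1, hx2⟩ := hx
        rw [Submodule.mem_span_singleton] at hx2
        obtain ⟨a, rfl⟩ := hx2
        rcases eq_or_ne a 0 with rfl | ha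
        · simp
        · exact absurd (by simpa [ha] using T'.smul_mem a⁻¹ hx1) hvT'
      have := Submodule.finrank_sup_add_finrank_inf_eq T' (Submodule.span F {v})
      rw [hinf, finrank_bot, finrank_span_singleton hv0, hT's] at this
      simpa [hf] using this
    simp only [hS, mem_filter, mem_univ, true_and]
    exact ⟨hrank, le_sup_left, sup_le hTW (by rwa [Submodule.span_le, Set.singleton_subset_iff])⟩
  have hfiber : ∀ T ∈ S, (E.filter (fun v => f v = T)).card = c ^ (s+1) - c ^ s := by
    intro T hT
    simp only [hS, mem_filter, mem_univ, true_and] at hT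
    obtain ⟨hTr, hT'T, hTW'⟩ := hT
    have : E.filter (fun v => f v = T) = univ.filter (fun v => v ∈ T ∧ v ∉ T') := by
      ext v
      simp only [hE, mem_filter, mem_univ, true_and, and_assoc]
      constructor
      · rintro ⟨hvW, hvT', rfl⟩
        exact ⟨hmem v, hvT'⟩
      · rintro ⟨hvT, hvT'⟩
        refine ⟨hTW' hvT, hvT', ?_⟩
        have hle : f v ≤ T := sup_le hT'T (by rwa [Submodule.span_le, Set.singleton_subset_iff])
        have hlt : T' < f v := lt_of_le_of_ne le_sup_left (fun h => hvT' (h ▸ hmem v))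
        have := Submodule.finrank_lt_finrank_of_lt hlt
        exact Submodule.eq_of_le_of_finrank_le hle (by omega)
    rw [this, diffcard T T' hT'T, hTr, hT's]
  have hE_card : E.card = c ^ n - c ^ s := by
    rw [hE]
    have := diffcard W T' hTW
    rw [hT's] at this
    exact this
  have hmain : S.card * (c ^ (s+1) - c ^ s) = c ^ n - c ^ s := by
    rw [← hE_card, Finset.card_eq_sum_card_fiberwise hfS]
    rw [Finset.sum_congr rfl hfiber, Finset.sum_const, smul_eq_mul]
  -- cast to ℚ
  have hps : c ^ s ≤ c ^ (s+1) := Nat.pow_le_pow_right (by omega) (by omega)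
  have hpn : c ^ s ≤ c ^ n := Nat.pow_le_pow_right (by omega) hsn
  have hmainQ : (S.card : ℚ) * (q ^ (s+1) - q ^ s) = q ^ n - q ^ s := by
    have := congrArg (Nat.cast : ℕ → ℚ) hmain
    push_cast [Nat.cast_sub hps, Nat.cast_sub hpn] at this
    rw [hq]
    exact_mod_cast this
  have hden : (q:ℚ) ^ (s+1) - q ^ s ≠ 0 := by
    have : (q:ℚ) ^ s < q ^ (s+1) := by
      calc (q:ℚ)^s = q^s * 1 := by ring
      _ < q^s * q := by
        apply mul_lt_mul_of_pos_left hq2 (pow_pos hq0 s)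
      _ = q^(s+1) := by ring
    linarith
  have hq1 : q - 1 ≠ 0 := by linarith
  rw [hcard]
  have hns : n = s + (n - s) := by omega
  rw [qnum, eq_div_iff hq1]
  apply mul_right_cancel₀ hden
  have hqpow : (q:ℚ) ^ n = q ^ (n - s) * q ^ s := by rw [← pow_add]; congr 1; omega
  linear_combination (q - 1) * hmainQ + (q - 1) * hqpow

open Finset in
private lemma double_count {α β : Type*} [Fintype α] [Fintype β]
    (P : α → β → Prop) [∀ a b, Decidable (P a b)] :
    ∑ a : α, ((univ.filter fun b => P a b).card : ℚ)
      = ∑ b : β, ((univ.filter fun a => P a b).card : ℚ) := by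
  simp_rw [Finset.card_filter]
  push_cast
  exact Finset.sum_comm


/-- residual design, case `r′ = r − 1`: let `D` be a `t`-`(r,k,λ)_Q` design
in a polar space (parameter `ε`) with ambient space `V` over `F`, `|F| = q`, and let `H`
be a non-degenerate hyperplane such that the induced polar space `Q′` on `H` has rank
`r − 1` (and parameter `ε + 1`): every totally isotropic `(t−1)`-space lies in
`[r−t+1]_q(q^{r−t+1+ε}+1)` totally isotropic `t`-spaces, of which
`[r−t]_q(q^{r−t+1+ε}+1)` lie in `H`.  Then `Res_H(D) = {B ∈ D : B ⊆ H}` is a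
`(t−1)`-`(r−1,k,λ′)_{Q′}` design with `λ′ = λ·(q^{r−t+1+ε}+1)·[r−k]_q/[k−t+1]_q`; in
particular, for `k = r` no block of `D` is contained in `H`. -/
theorem polar_design_residual_rank_drop
    {F V : Type*} [Field F] [Fintype F] [AddCommGroup V] [Module F V]
    [FiniteDimensional F V]
    (q : ℚ) (hq : q = Fintype.card F)
    (r t k : ℕ) (ε : ℤ) (ht : 1 ≤ t) (htk : t ≤ k) (hkr : k ≤ r)
    (iso : Submodule F V → Prop)
    (hdown : ∀ U W : Submodule F V, U ≤ W → iso W → iso U)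
    (H : Submodule F V) (hH : finrank F ↥H = finrank F V - 1)
    (hNQ : ∀ T' : Submodule F V, iso T' → finrank F ↥T' = t - 1 →
      (Nat.card {T : Submodule F V // iso T ∧ finrank F ↥T = t ∧ T' ≤ T} : ℚ)
        = qnum q (r - t + 1) * (q ^ ((r : ℤ) - t + 1 + ε) + 1))
    (hNQ' : ∀ T' : Submodule F V, T' ≤ H → iso T' → finrank F ↥T' = t - 1 →
      (Nat.card {T : Submodule F V // iso T ∧ finrank F ↥T = t ∧ T' ≤ T ∧ T ≤ H} : ℚ)
        = qnum q (r - t) * (q ^ ((r : ℤ) - t + 1 + ε) + 1))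
    (lam : ℕ) (D : Set (Submodule F V))
    (hblocks : ∀ B ∈ D, iso B ∧ finrank F ↥B = k)
    (hdesign : ∀ T : Submodule F V, iso T → finrank F ↥T = t →
      Nat.card {B : Submodule F V // B ∈ D ∧ T ≤ B} = lam)
    (T' : Submodule F V) (hT'H : T' ≤ H) (hT'iso : iso T')
    (hT' : finrank F ↥T' = t - 1) :
    (Nat.card {B : Submodule F V // B ∈ D ∧ B ≤ H ∧ T' ≤ B} : ℚ)
      = lam * (q ^ ((r : ℤ) - t + 1 + ε) + 1) * qnum q (r - k) / qnum q (k - t + 1) ∧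
    (k = r → Nat.card {B : Submodule F V // B ∈ D ∧ B ≤ H ∧ T' ≤ B} = 0) := by
  classical
  haveI : Finite V := Module.finite_of_finite F
  haveI : Fintype V := Fintype.ofFinite V
  haveI : Fintype (Submodule F V) := Fintype.ofFinite _
  set A : ℚ := q ^ ((r : ℤ) - t + 1 + ε) + 1 with hA
  have hq2 : (1:ℚ) < q := by rw [hq]; exact_mod_cast Fintype.one_lt_card
  have hq1 : q - 1 ≠ 0 := by linarith
  have hq0 : (0:ℚ) < q := by linarith
  have hKpos : ∀ m : ℕ, 0 < qnum q (m+1) := by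
    intro m
    have hp : (1:ℚ) < q ^ (m+1) := one_lt_pow₀ hq2 (Nat.succ_ne_zero m)
    exact div_pos (by linarith) (by linarith)
  set pT : Submodule F V → Prop := fun T => iso T ∧ finrank F ↥T = t ∧ T' ≤ T with hpT
  set pB : Submodule F V → Prop := fun B => B ∈ D ∧ T' ≤ B with hpB
  have ncard : ∀ (p : Submodule F V → Prop) (_ : DecidablePred p),
      Nat.card {x : Submodule F V // p x} = (univ.filter p).card := by
    intro p hp
    rw [Nat.card_eq_fintype_card]
    convert Fintype.card_subtype p <;> exact Subsingleton.elim _ _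
  have hts : t - 1 + 1 = t := by omega
  -- per-block counts
  have blockcount : ∀ B ∈ D, T' ≤ B →
      ((univ.filter fun T : Submodule F V => finrank F ↥T = t ∧ T' ≤ T ∧ T ≤ B).card : ℚ)
        = qnum q (k - t + 1) := by
    intro B hB hT'B
    have hc := count_cover q hq (t-1) T' B hT'B hT'
    rw [hts, (hblocks B hB).2, show k - (t-1) = k - t + 1 from by omega] at hc
    rw [← ncard _ _]
    exact hc
  have blockcountH : ∀ B ∈ D, T' ≤ B →
      ((univ.filter fun T : Submodule F V =>
          finrank F ↥T = t ∧ T' ≤ T ∧ T ≤ B ∧ T ≤ H).card : ℚ)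
        = if B ≤ H then qnum q (k - t + 1) else qnum q (k - t) := by
    intro B hB hT'B
    have hT'BH : T' ≤ B ⊓ H := le_inf hT'B hT'H
    have hc := count_cover q hq (t-1) T' (B ⊓ H) hT'BH hT'
    rw [hts] at hc
    have hfe : (univ.filter fun T : Submodule F V =>
          finrank F ↥T = t ∧ T' ≤ T ∧ T ≤ B ∧ T ≤ H)
        = (univ.filter fun T : Submodule F V =>
          finrank F ↥T = t ∧ T' ≤ T ∧ T ≤ B ⊓ H) := by
      apply filter_congr; intro T _; simp only [le_inf_iff]; try tauto
    rw [hfe, ← ncard _ _, hc]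
    by_cases hBH : B ≤ H
    · rw [if_pos hBH, inf_eq_left.mpr hBH, (hblocks B hB).2,
        show k - (t-1) = k - t + 1 from by omega]
    · rw [if_neg hBH]
      have hkV : k ≤ finrank F V := (hblocks B hB).2 ▸ Submodule.finrank_le B
      have hk1 : 1 ≤ k := le_trans ht htk
      have hsup : finrank F ↥(B ⊔ H) = finrank F V := by
        have hlt : H < B ⊔ H := by
          apply lt_of_le_of_ne le_sup_right
          intro h
          exact hBH (le_trans le_sup_left h.symm.le)
        have h1 := Submodule.finrank_lt_finrank_of_lt hlt
        have h2 : finrank F ↥(B ⊔ H) ≤ finrank F V := Submodule.finrank_le _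
        omega
      have hinf := Submodule.finrank_sup_add_finrank_inf_eq B H
      rw [(hblocks B hB).2, hH, hsup] at hinf
      have hfr : finrank F ↥(B ⊓ H) = k - 1 := by omega
      rw [hfr, show k - 1 - (t-1) = k - t from by omega]
  -- global counts
  have hb1 : ((univ.filter pT).card : ℚ) = qnum q (r-t+1) * A := by
    rw [← ncard pT _]
    exact hNQ T' hT'iso hT'
  have hb2 : ((univ.filter fun T => pT T ∧ T ≤ H).card : ℚ) = qnum q (r-t) * A := by
    rw [← ncard _ _]
    have e : Nat.card {T : Submodule F V // pT T ∧ T ≤ H}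
        = Nat.card {T : Submodule F V // iso T ∧ finrank F ↥T = t ∧ T' ≤ T ∧ T ≤ H} :=
      Nat.card_congr (Equiv.subtypeEquivRight (fun T => by rw [hpT]; tauto))
    rw [e]
    exact hNQ' T' hT'H hT'iso hT'
  have hdes : ∀ T : Submodule F V, pT T →
      (univ.filter fun B => B ∈ D ∧ T ≤ B).card = lam := by
    intro T hTp
    rw [← ncard _ _]
    exact hdesign T hTp.1 hTp.2.1
  -- equation 1
  have dc1 := double_count (fun T B : Submodule F V => pT T ∧ B ∈ D ∧ T ≤ B)
  have lhs1 : ∑ T : Submodule F V, ((univ.filter fun B => pT T ∧ B ∈ D ∧ T ≤ B).card : ℚ)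
      = qnum q (r-t+1) * A * lam := by
    have step : ∀ T : Submodule F V,
        ((univ.filter fun B => pT T ∧ B ∈ D ∧ T ≤ B).card : ℚ)
        = if pT T then (lam:ℚ) else 0 := by
      intro T
      by_cases h : pT T
      · rw [if_pos h,
          show (univ.filter fun B => pT T ∧ B ∈ D ∧ T ≤ B)
            = univ.filter fun B => B ∈ D ∧ T ≤ B from
          filter_congr (fun B _ => and_iff_right h)]
        exact_mod_cast hdes T h
      · rw [if_neg h,
          filter_eq_empty_iff.mpr (fun B _ hcon => h hcon.1)]
        simp
    rw [Finset.sum_congr rfl (fun T _ => step T), ← Finset.sum_filter,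
      Finset.sum_const, nsmul_eq_mul, hb1]
    try ring
  have rhs1 : ∑ B : Submodule F V, ((univ.filter fun T => pT T ∧ B ∈ D ∧ T ≤ B).card : ℚ)
      = ((univ.filter pB).card : ℚ) * qnum q (k-t+1) := by
    have step : ∀ B : Submodule F V,
        ((univ.filter fun T => pT T ∧ B ∈ D ∧ T ≤ B).card : ℚ)
        = if pB B then qnum q (k-t+1) else 0 := by
      intro B
      by_cases h : pB B
      · rw [if_pos h,
          show (univ.filter fun T => pT T ∧ B ∈ D ∧ T ≤ B)
            = univ.filter fun T : Submodule F V => finrank F ↥T = t ∧ T' ≤ T ∧ T ≤ B from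
          filter_congr (fun T _ => by
            simp only [hpT]
            constructor
            · rintro ⟨⟨hi, hd, ht'⟩, hD, hTB⟩; exact ⟨hd, ht', hTB⟩
            · rintro ⟨hd, ht', hTB⟩
              exact ⟨⟨hdown T B hTB (hblocks B h.1).1, hd, ht'⟩, h.1, hTB⟩)]
        exact blockcount B h.1 h.2
      · rw [if_neg h,
          filter_eq_empty_iff.mpr
            (fun T _ hcon => h ⟨hcon.2.1, le_trans hcon.1.2.2 hcon.2.2⟩)]
        simp
    rw [Finset.sum_congr rfl (fun B _ => step B), ← Finset.sum_filter,
      Finset.sum_const, nsmul_eq_mul]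
  -- equation 2
  have dc2 := double_count (fun T B : Submodule F V => (pT T ∧ T ≤ H) ∧ B ∈ D ∧ T ≤ B)
  have lhs2 : ∑ T : Submodule F V,
      ((univ.filter fun B => (pT T ∧ T ≤ H) ∧ B ∈ D ∧ T ≤ B).card : ℚ)
      = qnum q (r-t) * A * lam := by
    have step : ∀ T : Submodule F V,
        ((univ.filter fun B => (pT T ∧ T ≤ H) ∧ B ∈ D ∧ T ≤ B).card : ℚ)
        = if pT T ∧ T ≤ H then (lam:ℚ) else 0 := by
      intro T
      by_cases h : pT T ∧ T ≤ H
      · rw [if_pos h,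
          show (univ.filter fun B => (pT T ∧ T ≤ H) ∧ B ∈ D ∧ T ≤ B)
            = univ.filter fun B => B ∈ D ∧ T ≤ B from
          filter_congr (fun B _ => and_iff_right h)]
        exact_mod_cast hdes T h.1
      · rw [if_neg h,
          filter_eq_empty_iff.mpr (fun B _ hcon => h hcon.1)]
        simp
    rw [Finset.sum_congr rfl (fun T _ => step T), ← Finset.sum_filter,
      Finset.sum_const, nsmul_eq_mul, hb2]
    try ring
  set N : ℕ := ((univ.filter pB).filter (fun B => B ≤ H)).card with hN
  set M2 : ℕ := ((univ.filter pB).filter (fun B => ¬ B ≤ H)).card with hM2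
  have hMsplit : (univ.filter pB).card = N + M2 :=
    (card_filter_add_card_filter_not _).symm
  have rhs2 : ∑ B : Submodule F V,
      ((univ.filter fun T => (pT T ∧ T ≤ H) ∧ B ∈ D ∧ T ≤ B).card : ℚ)
      = N * qnum q (k-t+1) + M2 * qnum q (k-t) := by
    have step : ∀ B : Submodule F V,
        ((univ.filter fun T => (pT T ∧ T ≤ H) ∧ B ∈ D ∧ T ≤ B).card : ℚ)
        = if pB B then (if B ≤ H then qnum q (k-t+1) else qnum q (k-t)) else 0 := by
      intro B
      by_cases h : pB B
      · rw [if_pos h,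
          show (univ.filter fun T => (pT T ∧ T ≤ H) ∧ B ∈ D ∧ T ≤ B)
            = univ.filter fun T : Submodule F V =>
                finrank F ↥T = t ∧ T' ≤ T ∧ T ≤ B ∧ T ≤ H from
          filter_congr (fun T _ => by
            simp only [hpT]
            constructor
            · rintro ⟨⟨⟨hi, hd, ht'⟩, hTH⟩, hD, hTB⟩; exact ⟨hd, ht', hTB, hTH⟩
            · rintro ⟨hd, ht', hTB, hTH⟩
              exact ⟨⟨⟨hdown T B hTB (hblocks B h.1).1, hd, ht'⟩, hTH⟩, h.1, hTB⟩)]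
        exact blockcountH B h.1 h.2
      · rw [if_neg h,
          filter_eq_empty_iff.mpr
            (fun T _ hcon => h ⟨hcon.2.1, le_trans hcon.1.1.2.2 hcon.2.2⟩)]
        simp
    rw [Finset.sum_congr rfl (fun B _ => step B), ← Finset.sum_filter,
      ← Finset.sum_filter_add_sum_filter_not (univ.filter pB) (fun B => B ≤ H)]
    congr 1
    · rw [Finset.sum_congr rfl (fun B hB => if_pos (mem_filter.mp hB).2),
        Finset.sum_const, nsmul_eq_mul]
    · rw [Finset.sum_congr rfl (fun B hB => if_neg (mem_filter.mp hB).2),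
        Finset.sum_const, nsmul_eq_mul]
  have eq1 : qnum q (r-t+1) * A * lam = ((N:ℚ) + M2) * qnum q (k-t+1) := by
    rw [← lhs1, dc1, rhs1, hMsplit]
    push_cast
    ring
  have eq2 : qnum q (r-t) * A * lam = N * qnum q (k-t+1) + M2 * qnum q (k-t) := by
    rw [← lhs2, dc2, rhs2]
  -- algebraic identities
  have ha : qnum q (k-t+1) - qnum q (k-t) = q ^ (k-t) := by
    rw [qnum, qnum, div_sub_div_same, pow_succ, div_eq_iff hq1]
    ring
  have hb : qnum q (r-t) * qnum q (k-t+1) - qnum q (k-t) * qnum q (r-t+1)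
      = q ^ (k-t) * qnum q (r-k) := by
    rw [show r - t = (k - t) + (r - k) from by omega]
    simp only [qnum, pow_add, pow_succ]
    field_simp
    ring
  have hKp_ne : qnum q (k-t+1) ≠ 0 := ne_of_gt (hKpos _)
  have hqa_ne : (q:ℚ)^(k-t) ≠ 0 := pow_ne_zero _ (by linarith)
  have key : (N:ℚ) * qnum q (k-t+1) = lam * A * qnum q (r-k) := by
    apply mul_right_cancel₀ hqa_ne
    linear_combination (qnum q (k-t)) * eq1 - (qnum q (k-t+1)) * eq2
      + ((lam:ℚ) * A) * hb - (N:ℚ) * qnum q (k-t+1) * ha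
  have hNgoal : Nat.card {B : Submodule F V // B ∈ D ∧ B ≤ H ∧ T' ≤ B} = N := by
    have hfe : (univ.filter fun B : Submodule F V => B ∈ D ∧ B ≤ H ∧ T' ≤ B)
        = (univ.filter pB).filter (fun B => B ≤ H) := by
      rw [filter_filter]
      apply filter_congr
      intro B _
      rw [hpB]
      tauto
    rw [ncard _ _, hfe]
  constructor
  · rw [hNgoal, eq_div_iff hKp_ne]
    exact key
  · intro hk
    rw [hNgoal]
    have h0 : qnum q (r - k) = 0 := by
      rw [show r - k = 0 from by omega]
      simp [qnum]
    have hz : (N:ℚ) * qnum q (k-t+1) = 0 := by rw [key, h0]; ring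
    have hN0 : (N:ℚ) = 0 := by
      rcases mul_eq_zero.mp hz with h | h
      · exact h
      · exact absurd h hKp_ne
    exact_mod_cast hN0
end
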